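/- The set C = [0,1/2]^2 ∪ (1/2,1]^2 ⊆ [0,1]^2 is a symmetric measurable covering single-insertion code over [0,1] (i.e., every sequence in [0,1]^3 has a length-2 subsequence in C) of Lebesgue measure 1/2; consequently s([0,1],3,2) = s*([0,1],3,2) = 1/2. -/

import Mathlib

open MeasureTheory Filter Topology ENNReal

/-- `x` covers `a` if `x` is a subsequence of `a`. -/
def Covers {X : Type*} {r k : ℕ} (x : Fin r → X) (a : Fin k → X) : Prop :=
  ∃ g : Fin r → Fin k, StrictMono g ∧ ∀ i, a (g i) = x i

/-- `C ⊆ X^r` is a covering `(k-r)`-insertion code over `X`: every sequence in `X^k`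
is covered by some sequence in `C`. -/
def IsCoveringCode {X : Type*} (r k : ℕ) (C : Set (Fin r → X)) : Prop :=
  ∀ a : Fin k → X, ∃ x ∈ C, Covers x a

/-- Minimum size of a covering `(k-r)`-insertion code over the alphabet `[n]`. -/
noncomputable def covNum (n k r : ℕ) : ℕ :=
  sInf {m | ∃ C : Finset (Fin r → Fin n), IsCoveringCode r k (↑C : Set (Fin r → Fin n)) ∧ C.card = m}

/-- The unit cube `[0,1]^r`. -/
def unitCube (r : ℕ) : Set (Fin r → ℝ) := {x | ∀ i, x i ∈ Set.Icc (0 : ℝ) 1}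

/-- `C ⊆ [0,1]^r` covers `[0,1]^k`. -/
def CoversCube (r k : ℕ) (C : Set (Fin r → ℝ)) : Prop :=
  ∀ a ∈ unitCube k, ∃ x ∈ C, Covers x a

/-- Delete the `i`-th coordinate of a length `r+1` sequence. -/
def deleteAt {X : Type*} {r : ℕ} (i : Fin (r + 1)) (x : Fin (r + 1) → X) : Fin r → X :=
  x ∘ i.succAbove

/-- `extSet C i` is the set `C_i` of sequences in `X^{r+1}` whose subsequence obtained by
deleting the `i`-th coordinate belongs to `C`. -/
def extSet {X : Type*} {r : ℕ} (C : Set (Fin r → X)) (i : Fin (r + 1)) :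
    Set (Fin (r + 1) → X) :=
  {x | deleteAt i x ∈ C}

/-- A set of sequences is symmetric if it is closed under permuting the coordinates. -/
def IsSymmetric {X : Type*} {k : ℕ} (M : Set (Fin k → X)) : Prop :=
  ∀ x ∈ M, ∀ σ : Equiv.Perm (Fin k), x ∘ σ ∈ M

/-- The symmetric closure of a set of sequences. -/
def SymClosure {X : Type*} {k : ℕ} (M : Set (Fin k → X)) : Set (Fin k → X) :=
  {x | ∃ σ : Equiv.Perm (Fin k), x ∘ σ ∈ M}

/-- A Turán `(n,k,r)`-system: a family of `r`-element subsets of `[n]` such that every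
`k`-element subset of `[n]` contains a member of the family. -/
def IsTuranSystem (n k r : ℕ) (F : Finset (Finset (Fin n))) : Prop :=
  (∀ A ∈ F, A.card = r) ∧ ∀ K : Finset (Fin n), K.card = k → ∃ A ∈ F, A ⊆ K

/-- Minimum size of a Turán `(n,k,r)`-system. -/
noncomputable def turanNum (n k r : ℕ) : ℕ :=
  sInf {m | ∃ F : Finset (Finset (Fin n)), IsTuranSystem n k r F ∧ F.card = m}

/-- The code `[0,1/2]² ∪ (1/2,1]²`. -/
def halfCode : Set (Fin 2 → ℝ) :=
  {x | ∀ i, x i ∈ Set.Icc (0 : ℝ) (1 / 2)} ∪ {x | ∀ i, x i ∈ Set.Ioc (1 / 2 : ℝ) 1}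

/-!
For the lower bound let `T = [0,1]² \ C`. The covering property says that `T` contains no triple
`(x, y), (x, z), (y, z)`. Let `b x` and `a x` be the measures of the sections `{y | (x, y) ∈ T}`
and `{y | (y, x) ∈ T}`, and `s = a + b`. For `(x, y) ∈ T` the sets `{z | (x, z) ∈ T}` and
`{z | (y, z) ∈ T}` are disjoint, and so are `{w | (w, x) ∈ T}` and `{w | (w, y) ∈ T}`; hence
`s x + s y ≤ 2` on `T`. Integrating over `T` gives `∫ s² ≤ 2 λ(T)`, while `∫ s = 2 λ(T)`, so by
Cauchy–Schwarz `(2 λ(T))² ≤ 2 λ(T)`, i.e. `λ(T) ≤ 1/2` and `λ(C) ≥ 1/2`. The half code attains the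
bound because two of any three points of `[0,1]` lie on the same side of `1/2`.
-/

section Sections

variable {α β : Type*} [MeasurableSpace α] [MeasurableSpace β] {μ : Measure α} {ν : Measure β}
  {T : Set (α × β)}

theorem setLIntegral_comp_fst_eq_lintegral_mul_measure_prodMk [SFinite ν] (hT : MeasurableSet T)
    {f : α → ℝ≥0∞} (hf : Measurable f) :
    ∫⁻ p in T, f p.1 ∂μ.prod ν = ∫⁻ x, f x * ν (Prod.mk x ⁻¹' T) ∂μ := by
  rw [← withDensity_apply _ hT, ← prod_withDensity_left hf, Measure.prod_apply hT,
    lintegral_withDensity_eq_lintegral_mul _ hf (measurable_measure_prodMk_left hT)]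
  rfl

theorem setLIntegral_comp_snd_eq_lintegral_mul_measure_prodMk [SFinite μ] [SFinite ν]
    (hT : MeasurableSet T) {g : β → ℝ≥0∞} (hg : Measurable g) :
    ∫⁻ p in T, g p.2 ∂μ.prod ν = ∫⁻ y, g y * μ ((·, y) ⁻¹' T) ∂ν := by
  rw [← withDensity_apply _ hT, ← prod_withDensity_right hg, Measure.prod_apply_symm hT,
    lintegral_withDensity_eq_lintegral_mul _ hg (measurable_measure_prodMk_right hT)]
  rfl

end Sections

theorem ENNReal.le_one_of_sq_le_self {a : ℝ≥0∞} (ha : a ≠ ∞) (h : a ^ 2 ≤ a) : a ≤ 1 := by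
  rcases eq_or_ne a 0 with rfl | h0
  · exact zero_le_one
  · rw [sq] at h
    exact (ENNReal.mul_le_mul_iff_left h0 ha).1 (h.trans_eq (one_mul a).symm)

section ProbabilityMeasure

variable {α : Type*} [MeasurableSpace α] {μ : Measure α} [IsProbabilityMeasure μ]

theorem sq_lintegral_le_lintegral_sq {f : α → ℝ≥0∞} (hf : AEMeasurable f μ) :
    (∫⁻ x, f x ∂μ) ^ 2 ≤ ∫⁻ x, f x ^ 2 ∂μ := by
  have h := ENNReal.lintegral_mul_le_Lp_mul_Lq μ Real.HolderConjugate.two_two hf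
    (aemeasurable_const (b := (1 : ℝ≥0∞)))
  simp only [Pi.mul_apply, mul_one, one_rpow, lintegral_const, measure_univ] at h
  calc (∫⁻ x, f x ∂μ) ^ 2 ≤ ((∫⁻ x, f x ^ (2 : ℝ) ∂μ) ^ (1 / 2 : ℝ)) ^ 2 := by gcongr
    _ = ∫⁻ x, f x ^ 2 ∂μ := by
      rw [← ENNReal.rpow_natCast, ← ENNReal.rpow_mul]
      norm_num

theorem measure_add_measure_le_one_of_disjoint {s t : Set α} (h : Disjoint s t)
    (ht : MeasurableSet t) : μ s + μ t ≤ 1 :=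
  (measure_union h ht).symm.trans_le prob_le_one

theorem prod_le_half_of_no_transitive_triangle {T : Set (α × α)} (hT : MeasurableSet T)
    (htri : ∀ x y z, (x, y) ∈ T → (x, z) ∈ T → (y, z) ∈ T → False) :
    μ.prod μ T ≤ 1 / 2 := by
  set b : α → ℝ≥0∞ := fun x => μ (Prod.mk x ⁻¹' T)
  set a : α → ℝ≥0∞ := fun y => μ ((·, y) ⁻¹' T)
  set s : α → ℝ≥0∞ := fun x => a x + b x
  have hb : Measurable b := measurable_measure_prodMk_left hT
  have ha : Measurable a := measurable_measure_prodMk_right hT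
  have hs : Measurable s := ha.add hb
  have hedge : ∀ p ∈ T, s p.1 + s p.2 ≤ 2 := by
    rintro ⟨x, y⟩ hxy
    have hout : b x + b y ≤ 1 := measure_add_measure_le_one_of_disjoint
      (Set.disjoint_left.2 fun z hxz hyz => htri x y z hxy hxz hyz) (measurable_prodMk_left hT)
    have hin : a x + a y ≤ 1 := measure_add_measure_le_one_of_disjoint
      (Set.disjoint_left.2 fun w hwx hwy => htri w x y hwx hwy hxy) (measurable_prodMk_right hT)
    calc s x + s y = (a x + a y) + (b x + b y) := by simp only [s]; ring
      _ ≤ 1 + 1 := add_le_add hin hout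
      _ = 2 := one_add_one_eq_two
  have hs_int : ∫⁻ x, s x ∂μ = 2 * μ.prod μ T := by
    simp only [s, a, b]
    rw [lintegral_add_left (measurable_measure_prodMk_right hT), ← Measure.prod_apply hT,
      ← Measure.prod_apply_symm hT, two_mul]
  have hsq_int : ∫⁻ x, s x ^ 2 ∂μ ≤ 2 * μ.prod μ T := calc
    ∫⁻ x, s x ^ 2 ∂μ = ∫⁻ x, s x * b x ∂μ + ∫⁻ y, s y * a y ∂μ := by
      rw [← lintegral_add_left (f := fun x => s x * b x) (hs.mul hb)]
      simp only [s, sq, mul_add, add_comm]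
    _ = ∫⁻ p in T, (s p.1 + s p.2) ∂μ.prod μ := by
      rw [lintegral_add_left (f := fun p : α × α => s p.1) (hs.comp measurable_fst),
        setLIntegral_comp_fst_eq_lintegral_mul_measure_prodMk hT hs,
        setLIntegral_comp_snd_eq_lintegral_mul_measure_prodMk hT hs]
    _ ≤ ∫⁻ _ in T, 2 ∂μ.prod μ := setLIntegral_mono measurable_const hedge
    _ = 2 * μ.prod μ T := setLIntegral_const T 2
  have hsq : (2 * μ.prod μ T) ^ 2 ≤ 2 * μ.prod μ T := calc
    (2 * μ.prod μ T) ^ 2 = (∫⁻ x, s x ∂μ) ^ 2 := by rw [hs_int]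
    _ ≤ ∫⁻ x, s x ^ 2 ∂μ := sq_lintegral_le_lintegral_sq hs.aemeasurable
    _ ≤ 2 * μ.prod μ T := hsq_int
  have h2t : 2 * μ.prod μ T ≤ 1 := ENNReal.le_one_of_sq_le_self (by finiteness) hsq
  rwa [ENNReal.le_div_iff_mul_le (by simp) (by simp), mul_comm]

theorem half_le_prod_of_forall_pair_mem {C : Set (α × α)} (hC : MeasurableSet C)
    (hcov : ∀ x y z, (x, y) ∈ C ∨ (x, z) ∈ C ∨ (y, z) ∈ C) :
    1 / 2 ≤ μ.prod μ C := by
  have hcompl : μ.prod μ Cᶜ ≤ 1 / 2 :=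
    prod_le_half_of_no_transitive_triangle hC.compl fun x y z hxy hxz hyz => by
      rcases hcov x y z with h | h | h <;> contradiction
  rw [prob_compl_eq_one_sub hC, tsub_le_iff_right] at hcompl
  exact (ENNReal.add_le_add_iff_left (a := 1 / 2) (by simp)).1 (by rwa [ENNReal.add_halves])

end ProbabilityMeasure

theorem half_le_volume_of_forall_pair_mem_Icc {C : Set (ℝ × ℝ)} (hC : MeasurableSet C)
    (hcov : ∀ x ∈ Set.Icc (0 : ℝ) 1, ∀ y ∈ Set.Icc (0 : ℝ) 1, ∀ z ∈ Set.Icc (0 : ℝ) 1,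
      (x, y) ∈ C ∨ (x, z) ∈ C ∨ (y, z) ∈ C) :
    1 / 2 ≤ volume C := by
  set I := Set.Icc (0 : ℝ) 1
  have : IsProbabilityMeasure (volume.restrict I) := ⟨by simp [I]⟩
  -- Adding the pairs outside `I × I` makes every triple of reals, not only those in `I`, covered.
  set D := C ∪ (I ×ˢ I)ᶜ
  have hD : MeasurableSet D := hC.union (measurableSet_Icc.prod measurableSet_Icc).compl
  have hcovD : ∀ x y z, (x, y) ∈ D ∨ (x, z) ∈ D ∨ (y, z) ∈ D := by
    intro x y z
    by_cases hx : x ∈ I <;> by_cases hy : y ∈ I <;> by_cases hz : z ∈ I <;> simp_all [D]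
  calc 1 / 2 ≤ (volume.restrict I).prod (volume.restrict I) D :=
        half_le_prod_of_forall_pair_mem hD hcovD
    _ = volume (D ∩ I ×ˢ I) := by
      rw [Measure.prod_restrict, ← Measure.volume_eq_prod, Measure.restrict_apply hD]
    _ ≤ volume C := measure_mono fun p ⟨hp, hpI⟩ => hp.resolve_right (not_not.2 hpI)

theorem covers_pair_iff {X : Type*} {k : ℕ} {x : Fin 2 → X} {a : Fin k → X} :
    Covers x a ↔ ∃ i j, i < j ∧ x = ![a i, a j] := by
  constructor
  · rintro ⟨g, hg, hga⟩
    refine ⟨g 0, g 1, hg Fin.zero_lt_one, ?_⟩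
    ext i
    fin_cases i <;> simp [hga]
  · rintro ⟨i, j, hij, rfl⟩
    refine ⟨![i, j], Fin.strictMono_iff_lt_succ.2 fun l => ?_, fun l => ?_⟩
    · fin_cases l
      exact hij
    · fin_cases l <;> rfl

theorem unitCube_eq_Icc (r : ℕ) : unitCube r = Set.Icc 0 1 := by
  ext x
  simp [unitCube, Pi.le_def, forall_and]

theorem volume_unitCube (r : ℕ) : volume (unitCube r) = 1 := by
  simp [unitCube_eq_Icc, Real.volume_Icc_pi]

theorem half_le_volume_of_coversCube {C : Set (Fin 2 → ℝ)} (hC : MeasurableSet C)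
    (hcov : CoversCube 2 3 C) : 1 / 2 ≤ volume C := by
  have he := (volume_preserving_finTwoArrow ℝ).symm
  rw [← he.measure_preimage_equiv]
  refine half_le_volume_of_forall_pair_mem_Icc (he.measurable hC) fun x hx y hy z hz => ?_
  have ha : ![x, y, z] ∈ unitCube 3 := by
    intro i
    fin_cases i <;> assumption
  obtain ⟨b, hb, hcovb⟩ := hcov _ ha
  obtain ⟨i, j, hij, rfl⟩ := covers_pair_iff.1 hcovb
  fin_cases i <;> fin_cases j <;> simp_all

theorem half_le_toReal_volume_of_coversCube {C : Set (Fin 2 → ℝ)} (hsub : C ⊆ unitCube 2)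
    (hC : MeasurableSet C) (hcov : CoversCube 2 3 C) : 1 / 2 ≤ (volume C).toReal := by
  have hfin : volume C ≠ ∞ := ne_top_of_le_ne_top (by simp [volume_unitCube]) (measure_mono hsub)
  simpa using ENNReal.toReal_mono hfin (half_le_volume_of_coversCube hC hcov)

theorem halfCode_eq_pi : halfCode =
    (Set.univ.pi fun _ => Set.Icc 0 (1 / 2)) ∪ Set.univ.pi fun _ => Set.Ioc (1 / 2) 1 := by
  ext x
  simp only [halfCode, Set.mem_union, Set.mem_ofPred_eq, Set.mem_pi, Set.mem_univ, true_implies]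

theorem halfCode_subset_unitCube : halfCode ⊆ unitCube 2 := by
  rintro x (hx | hx) i
  · exact ⟨(hx i).1, (hx i).2.trans (by norm_num)⟩
  · exact ⟨(by norm_num : (0 : ℝ) ≤ 1 / 2).trans (hx i).1.le, (hx i).2⟩

theorem measurableSet_halfCode : MeasurableSet halfCode := by
  rw [halfCode_eq_pi]
  exact (MeasurableSet.univ_pi fun _ => measurableSet_Icc).union
    (MeasurableSet.univ_pi fun _ => measurableSet_Ioc)

theorem volume_halfCode : volume halfCode = 1 / 2 := by
  have hdisj : Disjoint (Set.univ.pi fun _ : Fin 2 => Set.Icc (0 : ℝ) (1 / 2))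
      (Set.univ.pi fun _ => Set.Ioc (1 / 2) 1) :=
    Set.disjoint_left.2 fun x hx hx' => (hx 0 trivial).2.not_gt (hx' 0 trivial).1
  rw [halfCode_eq_pi, measure_union hdisj (MeasurableSet.univ_pi fun _ => measurableSet_Ioc),
    volume_pi_pi, volume_pi_pi]
  simp only [Real.volume_Icc, Real.volume_Ioc, Finset.prod_const, Finset.card_univ,
    Fintype.card_fin]
  rw [← ENNReal.ofReal_pow (by norm_num), ← ENNReal.ofReal_pow (by norm_num),
    ← ENNReal.ofReal_add (by positivity) (by positivity),
    show ((1 : ℝ) / 2 - 0) ^ 2 + (1 - 1 / 2) ^ 2 = 2⁻¹ by norm_num,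
    ENNReal.ofReal_inv_of_pos two_pos, ENNReal.ofReal_ofNat, one_div]

theorem isSymmetric_halfCode : IsSymmetric halfCode := by
  rintro x (hx | hx) σ
  · exact Or.inl fun i => hx (σ i)
  · exact Or.inr fun i => hx (σ i)

theorem pair_mem_halfCode {u v : ℝ} (hu : u ∈ Set.Icc (0 : ℝ) 1) (hv : v ∈ Set.Icc (0 : ℝ) 1)
    (huv : u ≤ 1 / 2 ↔ v ≤ 1 / 2) : ![u, v] ∈ halfCode := by
  by_cases hu' : u ≤ 1 / 2
  · refine Or.inl fun i => ?_
    fin_cases i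
    exacts [⟨hu.1, hu'⟩, ⟨hv.1, huv.1 hu'⟩]
  · refine Or.inr fun i => ?_
    fin_cases i
    exacts [⟨not_le.1 hu', hu.2⟩, ⟨not_le.1 (mt huv.2 hu'), hv.2⟩]

theorem coversCube_halfCode : CoversCube 2 3 halfCode := by
  intro a ha
  have hpair : ∀ i j, i < j → (a i ≤ 1 / 2 ↔ a j ≤ 1 / 2) → ∃ x ∈ halfCode, Covers x a :=
    fun i j hij h => ⟨_, pair_mem_halfCode (ha i) (ha j) h, covers_pair_iff.2 ⟨i, j, hij, rfl⟩⟩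
  by_cases h01 : a 0 ≤ 1 / 2 ↔ a 1 ≤ 1 / 2
  · exact hpair 0 1 (by decide) h01
  by_cases h02 : a 0 ≤ 1 / 2 ↔ a 2 ≤ 1 / 2
  · exact hpair 0 2 (by decide) h02
  · exact hpair 1 2 (by decide) (by tauto)

/-- `C = [0,1/2]² ∪ (1/2,1]² ⊆ [0,1]²` is a symmetric measurable covering
single-insertion code over `[0,1]` of measure `1/2`; consequently
`s([0,1],3,2) = s*([0,1],3,2) = 1/2`. -/
theorem halfCode_optimal :
    halfCode ⊆ unitCube 2 ∧ MeasurableSet halfCode ∧ IsSymmetric halfCode ∧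
      CoversCube 2 3 halfCode ∧ volume halfCode = 1 / 2 ∧
      sInf {v : ℝ | ∃ C : Set (Fin 2 → ℝ), C ⊆ unitCube 2 ∧ MeasurableSet C ∧
        CoversCube 2 3 C ∧ (volume C).toReal = v} = 1 / 2 ∧
      sInf {v : ℝ | ∃ C : Set (Fin 2 → ℝ), C ⊆ unitCube 2 ∧ MeasurableSet C ∧
        IsSymmetric C ∧ CoversCube 2 3 C ∧ (volume C).toReal = v} = 1 / 2 := by
  have hvol : (volume halfCode).toReal = 1 / 2 := by simp [volume_halfCode]
  refine ⟨halfCode_subset_unitCube, measurableSet_halfCode, isSymmetric_halfCode,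
    coversCube_halfCode, volume_halfCode, IsLeast.csInf_eq ⟨?_, ?_⟩, IsLeast.csInf_eq ⟨?_, ?_⟩⟩
  · exact ⟨halfCode, halfCode_subset_unitCube, measurableSet_halfCode, coversCube_halfCode, hvol⟩
  · rintro _ ⟨C, hsub, hC, hcov, rfl⟩
    exact half_le_toReal_volume_of_coversCube hsub hC hcov
  · exact ⟨halfCode, halfCode_subset_unitCube, measurableSet_halfCode, isSymmetric_halfCode,
      coversCube_halfCode, hvol⟩
  · rintro _ ⟨C, hsub, hC, -, hcov, rfl⟩
    exact half_le_toReal_volume_of_coversCube hsub hC hcov
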